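/- arXiv:math/0703831 — 4 statements merged into one kernel-verified Lean document; each statement's English description precedes it below -/
import Mathlib

section
/- Let γ : ℝ≥0 → ℝ be continuous with γ(t) ~ c²H(2H-1) t^(2H-2) L(t) as t → ∞, where 1/2 < H < 1, c > 0, and L is slowly varying at infinity and locally bounded. Define Var(t) = 2 ∫₀ᵗ ∫₀ᵛ γ(u) du dv. Then Var(t) ~ c² t^(2H) L(t) as t → ∞. -/
open Filter MeasureTheory intervalIntegral Set

lemma my_uct (k : ℝ → ℝ) (hk : Continuous k)
    (h : ∀ u : ℝ, Tendsto (fun s => k (s + u) - k s) atTop (nhds 0))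
    {ε : ℝ} (hε : 0 < ε) :
    ∃ S : ℝ, ∀ s ≥ S, ∀ u ∈ Set.Icc (0:ℝ) 1, |k (s + u) - k s| ≤ ε := by
  set E : ℕ → Set ℝ :=
    fun n => {u | u ∈ Set.Icc (0:ℝ) 2 ∧ ∀ s : ℝ, (n:ℝ) ≤ s → |k (s + u) - k s| ≤ ε/2} with hE
  have hclosed : ∀ n, IsClosed (E n) := by
    intro n
    have : E n = Set.Icc (0:ℝ) 2 ∩ ⋂ (s : ℝ), {u | (n:ℝ) ≤ s → |k (s + u) - k s| ≤ ε/2} := by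
      ext u; simp [hE, Set.mem_iInter]
    rw [this]
    refine isClosed_Icc.inter (isClosed_iInter fun s => ?_)
    by_cases hs : (n:ℝ) ≤ s
    · have : {u : ℝ | (n:ℝ) ≤ s → |k (s + u) - k s| ≤ ε/2}
          = (fun u => |k (s + u) - k s|) ⁻¹' Set.Iic (ε/2) := by
        ext u; simp [hs]
      rw [this]
      exact IsClosed.preimage (by fun_prop) isClosed_Iic
    · have : {u : ℝ | (n:ℝ) ≤ s → |k (s + u) - k s| ≤ ε/2} = Set.univ := by
        ext u; simp [hs]
      rw [this]; exact isClosed_univ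
  have hmono : Monotone E := by
    intro n m hnm u hu
    exact ⟨hu.1, fun s hs => hu.2 s (le_trans (by exact_mod_cast Nat.cast_le.mpr hnm) hs)⟩
  have hunion : ⋃ n, E n = Set.Icc (0:ℝ) 2 := by
    apply subset_antisymm
    · exact Set.iUnion_subset fun n u hu => hu.1
    · intro u hu
      have := (Metric.tendsto_atTop.1 (h u)) (ε/2) (by positivity)
      obtain ⟨N, hN⟩ := this
      obtain ⟨n, hn⟩ := exists_nat_ge N
      refine Set.mem_iUnion.2 ⟨n, hu, fun s hs => ?_⟩
      have := hN s (le_trans hn hs)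
      rw [Real.dist_eq, sub_zero] at this
      exact this.le
  have hμ : Tendsto (fun n => volume (E n)) atTop (nhds (volume (Set.Icc (0:ℝ) 2))) := by
    have := tendsto_measure_iUnion_atTop (μ := volume) hmono
    rwa [hunion] at this
  have h2 : volume (Set.Icc (0:ℝ) 2) = ENNReal.ofReal 2 := by
    rw [Real.volume_Icc]; norm_num
  have hev : ∀ᶠ n in atTop, ENNReal.ofReal (7/4) < volume (E n) := by
    apply hμ.eventually (eventually_gt_nhds ?_)
    rw [h2]; exact ENNReal.ofReal_lt_ofReal_iff (by norm_num) |>.2 (by norm_num)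
  obtain ⟨N, hN⟩ := hev.exists
  refine ⟨(N:ℝ) + 2, fun s hs u hu => ?_⟩
  -- find w with w ∈ E N and w + u ∈ E N
  obtain ⟨w, hw1, hw2⟩ : ∃ w, w ∈ E N ∧ w + u ∈ E N := by
    by_contra hcon
    push_neg at hcon
    set B : Set ℝ := (fun w => w + u) ⁻¹' E N with hB
    have hdisj : Disjoint (E N) B := by
      rw [Set.disjoint_left]
      intro w hwE hwB
      exact hcon w hwE hwB
    have hBmeas : MeasurableSet B :=
      (hclosed N).measurableSet.preimage (measurable_id.add_const u)
    have hμB : volume B = volume (E N) := measure_preimage_add_right volume u (E N)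
    have hsub : E N ∪ B ⊆ Set.Icc (-1:ℝ) 2 := by
      rintro w (hw | hw)
      · exact ⟨by linarith [hw.1.1], hw.1.2⟩
      · have h1 : (0:ℝ) ≤ w + u := hw.1.1
        have h2' : w + u ≤ 2 := hw.1.2
        exact ⟨by linarith [hu.2], by linarith [hu.1]⟩
    have hle : volume (E N ∪ B) ≤ ENNReal.ofReal 3 := by
      calc volume (E N ∪ B) ≤ volume (Set.Icc (-1:ℝ) 2) := measure_mono hsub
        _ = ENNReal.ofReal 3 := by rw [Real.volume_Icc]; norm_num
    have heq : volume (E N ∪ B) = volume (E N) + volume B := measure_union hdisj hBmeas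
    rw [heq, hμB] at hle
    have h72 : ENNReal.ofReal (7/2) ≤ volume (E N) + volume (E N) := by
      have := hN.le
      calc ENNReal.ofReal (7/2) = ENNReal.ofReal (7/4) + ENNReal.ofReal (7/4) := by
            rw [← ENNReal.ofReal_add (by norm_num) (by norm_num)]; norm_num
        _ ≤ volume (E N) + volume (E N) := add_le_add hN.le hN.le
    have : ENNReal.ofReal (7/2) ≤ ENNReal.ofReal 3 := le_trans h72 hle
    rw [ENNReal.ofReal_le_ofReal_iff (by norm_num)] at this
    norm_num at this
  -- now use both memberships
  have hw2' := hw2.2 (s - w) (by nlinarith [hw1.1.1, hw1.1.2])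
  have hw1' := hw1.2 (s - w) (by nlinarith [hw1.1.1, hw1.1.2])
  have e1 : s - w + (w + u) = s + u := by ring
  have e2 : s - w + w = s := by ring
  rw [e1] at hw2'; rw [e2] at hw1'
  calc |k (s + u) - k s|
      = |(k (s + u) - k (s - w)) - (k s - k (s - w))| := by ring_nf
    _ ≤ |k (s + u) - k (s - w)| + |k s - k (s - w)| := abs_sub _ _
    _ ≤ ε/2 + ε/2 := add_le_add hw2' hw1'
    _ = ε := by ring

lemma my_chain (k : ℝ → ℝ) (S ε : ℝ) (hε : 0 ≤ ε)
    (huct : ∀ s ≥ S, ∀ u ∈ Set.Icc (0:ℝ) 1, |k (s + u) - k s| ≤ ε) :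
    ∀ s ≥ S, ∀ u : ℝ, 0 ≤ u → |k (s + u) - k s| ≤ ε * (u + 1) := by
  have key : ∀ n : ℕ, ∀ s ≥ S, ∀ u : ℝ, 0 ≤ u → u ≤ (n:ℝ) + 1 →
      |k (s + u) - k s| ≤ ε * ((n:ℝ) + 1) := by
    intro n
    induction n with
    | zero =>
      intro s hs u hu0 hu1
      have := huct s hs u ⟨hu0, by simpa using hu1⟩
      simpa using this.trans (by norm_num)
    | succ n ih =>
      intro s hs u hu0 hu1
      by_cases hc : u ≤ (n:ℝ) + 1
      · have := ih s hs u hu0 hc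
        have hεn : ε * ((n:ℝ) + 1) ≤ ε * ((n:ℝ) + 1 + 1) := by nlinarith
        push_cast
        linarith
      · push_neg at hc
        have hn0 : (0:ℝ) ≤ (n:ℝ) := Nat.cast_nonneg n
        have h1 : (1:ℝ) ≤ u := by linarith
        have hu1' : u - 1 ≤ (n:ℝ) + 1 := by push_cast at hu1 ⊢; linarith
        have hu0' : 0 ≤ u - 1 := by linarith
        have ihh := ih s hs (u - 1) hu0' hu1'
        have hstep := huct (s + (u - 1)) (by linarith) 1 ⟨zero_le_one, le_refl 1⟩
        have e : s + (u - 1) + 1 = s + u := by ring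
        rw [e] at hstep
        calc |k (s + u) - k s|
            = |(k (s + u) - k (s + (u - 1))) + (k (s + (u - 1)) - k s)| := by ring_nf
          _ ≤ |k (s + u) - k (s + (u - 1))| + |k (s + (u - 1)) - k s| := abs_add_le _ _
          _ ≤ ε + ε * ((n:ℝ) + 1) := add_le_add hstep ihh
          _ = ε * ((n:ℝ) + 1 + 1) := by ring
          _ = ε * ((n + 1 :ℕ) + 1) := by push_cast; ring
  intro s hs u hu
  have hfl : ((⌊u⌋₊ : ℝ)) ≤ u := Nat.floor_le hu
  have hlt : u < (⌊u⌋₊ : ℝ) + 1 := Nat.lt_floor_add_one u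
  have := key ⌊u⌋₊ s hs u hu hlt.le
  nlinarith

lemma my_potter (f : ℝ → ℝ) (hf : Continuous f) (hpos : ∀ t, 0 < f t)
    (a : ℝ)
    (hreg : ∀ x : ℝ, 0 < x → Tendsto (fun t => f (x * t) / f t) atTop (nhds (x ^ a)))
    {ε : ℝ} (hε : 0 < ε) :
    ∃ T : ℝ, 1 ≤ T ∧ ∀ s t : ℝ, T ≤ s → s ≤ t →
      f s ≤ Real.exp ε * (s / t) ^ (a - ε) * f t ∧
      Real.exp (-ε) * (s / t) ^ (a + ε) * f t ≤ f s := by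
  set k : ℝ → ℝ := fun s => Real.log (f (Real.exp s)) - a * s with hk
  have hkc : Continuous k := by
    apply Continuous.sub
    · exact (hf.comp Real.continuous_exp).log (fun x => (hpos _).ne')
    · fun_prop
  have hpt : ∀ u : ℝ, Tendsto (fun s => k (s + u) - k s) atTop (nhds 0) := by
    intro u
    have h1 : Tendsto (fun t : ℝ => f (Real.exp u * t) / f t) atTop (nhds (Real.exp u ^ a)) :=
      hreg _ (Real.exp_pos u)
    have h2 : Tendsto (fun s : ℝ => f (Real.exp u * Real.exp s) / f (Real.exp s)) atTop
        (nhds (Real.exp u ^ a)) := h1.comp Real.tendsto_exp_atTop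
    have h3 : Tendsto (fun s : ℝ => Real.log (f (Real.exp u * Real.exp s) / f (Real.exp s)))
        atTop (nhds (a * u)) := by
      have hlog : Real.log (Real.exp u ^ a) = a * u := by
        rw [Real.log_rpow (Real.exp_pos u), Real.log_exp]
      rw [← hlog]
      exact (Real.continuousAt_log (by positivity : Real.exp u ^ a ≠ 0)).tendsto.comp h2
    have heq : (fun s : ℝ => k (s + u) - k s)
        = fun s => Real.log (f (Real.exp u * Real.exp s) / f (Real.exp s)) - a * u := by
      funext s
      rw [Real.log_div (hpos _).ne' (hpos _).ne']
      simp only [hk, ← Real.exp_add]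
      ring_nf
    rw [heq]
    simpa using h3.sub (tendsto_const_nhds (x := a * u))
  obtain ⟨S, hS⟩ := my_uct k hkc hpt hε
  refine ⟨max 1 (Real.exp S), le_max_left _ _, fun s t hTs hst => ?_⟩
  have hs1 : (1:ℝ) ≤ s := le_trans (le_max_left _ _) hTs
  have hs0 : (0:ℝ) < s := by linarith
  have ht0 : (0:ℝ) < t := by linarith
  have hσ : S ≤ Real.log s := by
    have := Real.log_le_log (Real.exp_pos S) (le_trans (le_max_right _ _) hTs)
    rwa [Real.log_exp] at this
  set u := Real.log t - Real.log s with hu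
  have hu0 : 0 ≤ u := by
    have := Real.log_le_log hs0 hst
    simp only [hu]; linarith
  have hch := my_chain k S ε hε.le hS (Real.log s) hσ u hu0
  have he : Real.log s + u = Real.log t := by simp [hu]
  rw [he] at hch
  have hks : k (Real.log s) = Real.log (f s) - a * Real.log s := by
    simp [hk, Real.exp_log hs0]
  have hkt : k (Real.log t) = Real.log (f t) - a * Real.log t := by
    simp [hk, Real.exp_log ht0]
  rw [hkt, hks] at hch
  have habs := abs_le.1 hch
  constructor
  · have hrw : Real.exp ε * (s / t) ^ (a - ε) * f t
        = Real.exp (ε + (a - ε) * (Real.log s - Real.log t) + Real.log (f t)) := by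
      rw [Real.rpow_def_of_pos (div_pos hs0 ht0), Real.log_div hs0.ne' ht0.ne',
        Real.exp_add, Real.exp_add, Real.exp_log (hpos t)]
      ring
    rw [hrw, ← Real.exp_log (hpos s), Real.exp_le_exp]
    have h1 := habs.1
    simp only [hu] at h1 ⊢
    nlinarith [h1]
  · have hrw : Real.exp (-ε) * (s / t) ^ (a + ε) * f t
        = Real.exp (-ε + (a + ε) * (Real.log s - Real.log t) + Real.log (f t)) := by
      rw [Real.rpow_def_of_pos (div_pos hs0 ht0), Real.log_div hs0.ne' ht0.ne',
        Real.exp_add, Real.exp_add, Real.exp_log (hpos t)]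
      ring
    rw [hrw, ← Real.exp_log (hpos s), Real.exp_le_exp]
    have h2 := habs.2
    simp only [hu] at h2 ⊢
    nlinarith [h2]

section
variable (f : ℝ → ℝ)

lemma my_tft (hf : Continuous f) (hpos : ∀ t, 0 < f t)
    (a : ℝ) (ha : -1 < a)
    (hreg : ∀ x : ℝ, 0 < x → Tendsto (fun t => f (x * t) / f t) atTop (nhds (x ^ a))) :
    Tendsto (fun t => t * f t) atTop atTop := by
  set ε0 := (a + 1) / 2 with hε0def
  have hε0 : 0 < ε0 := by simp only [hε0def]; linarith
  obtain ⟨T, hT1, hT⟩ := my_potter f hf hpos a hreg hε0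
  have hT0 : (0:ℝ) < T := lt_of_lt_of_le one_pos hT1
  set b := a - ε0 with hbdef
  have h1b : 0 < 1 + b := by simp only [hbdef, hε0def]; linarith
  set C := Real.exp (-ε0) * f T * (T ^ b)⁻¹ with hC
  have hTbpos : (0:ℝ) < T ^ b := Real.rpow_pos_of_pos hT0 b
  have hCpos : 0 < C := by
    rw [hC]
    exact mul_pos (mul_pos (Real.exp_pos _) (hpos T)) (inv_pos.2 hTbpos)
  have hlow : ∀ᶠ t in atTop, C * t ^ (1 + b) ≤ t * f t := by
    filter_upwards [eventually_ge_atTop T, eventually_ge_atTop (1:ℝ)] with t ht ht1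
    have ht0 : (0:ℝ) < t := by linarith
    have hP := (hT T t le_rfl ht).1
    have htb : (0:ℝ) < t ^ b := Real.rpow_pos_of_pos ht0 b
    have hdiv : (T / t) ^ b = T ^ b / t ^ b := Real.div_rpow hT0.le ht0.le b
    rw [hdiv] at hP
    have hP2 : f T * t ^ b ≤ Real.exp ε0 * T ^ b * f t := by
      have h2 := mul_le_mul_of_nonneg_right hP htb.le
      calc f T * t ^ b ≤ Real.exp ε0 * (T ^ b / t ^ b) * f t * t ^ b := h2
        _ = Real.exp ε0 * T ^ b * f t := by field_simp
    have hft : C * t ^ b ≤ f t := by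
      rw [hC, Real.exp_neg]
      have h3 := mul_le_mul_of_nonneg_right hP2
        (show (0:ℝ) ≤ (Real.exp ε0)⁻¹ * (T ^ b)⁻¹ by positivity)
      calc (Real.exp ε0)⁻¹ * f T * (T ^ b)⁻¹ * t ^ b
          = f T * t ^ b * ((Real.exp ε0)⁻¹ * (T ^ b)⁻¹) := by ring
        _ ≤ Real.exp ε0 * T ^ b * f t * ((Real.exp ε0)⁻¹ * (T ^ b)⁻¹) := h3
        _ = f t := by
            field_simp
    calc C * t ^ (1 + b) = C * (t ^ (1:ℝ) * t ^ b) := by rw [← Real.rpow_add ht0]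
      _ = t * (C * t ^ b) := by rw [Real.rpow_one]; ring
      _ ≤ t * f t := by
          have := mul_le_mul_of_nonneg_left hft (le_of_lt ht0)
          linarith
  have hgrow : Tendsto (fun t : ℝ => C * t ^ (1 + b)) atTop atTop :=
    (tendsto_rpow_atTop h1b).const_mul_atTop hCpos
  exact tendsto_atTop_mono' atTop hlow hgrow

end

lemma my_arith1 {x d : ℝ} (hx0 : 0 ≤ x) (hx : x < d/8) (hd1 : d ≤ 1) (hd0 : 0 < d) :
    1 - d/4 - d/8 ≤ (1 - d/4) * (1 - x) := by nlinarith

section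
variable (f : ℝ → ℝ)

lemma my_karamata_pos (hf : Continuous f) (hpos : ∀ t, 0 < f t)
    (a : ℝ) (ha : -1 < a)
    (hreg : ∀ x : ℝ, 0 < x → Tendsto (fun t => f (x * t) / f t) atTop (nhds (x ^ a))) :
    Tendsto (fun t => (a + 1) * (∫ s in (0:ℝ)..t, f s) / (t * f t)) atTop (nhds 1) := by
  have htft := my_tft f hf hpos a ha hreg
  have hint : ∀ p q : ℝ, IntervalIntegrable f volume p q :=
    fun p q => hf.intervalIntegrable p q
  have ha1 : (0:ℝ) < a + 1 := by linarith
  rw [Metric.tendsto_atTop]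
  intro δ0 hδ0
  set δ := min δ0 1 with hδdef
  have hδpos : 0 < δ := lt_min hδ0 one_pos
  have hδ1 : δ ≤ 1 := min_le_right _ _
  suffices hs : ∃ N, ∀ t ≥ N, |(a + 1) * (∫ s in (0:ℝ)..t, f s) / (t * f t) - 1| < δ by
    obtain ⟨N, hN⟩ := hs
    refine ⟨N, fun t ht => ?_⟩
    rw [Real.dist_eq]
    exact lt_of_lt_of_le (hN t ht) (min_le_left _ _)
  -- choose ε
  have hφ : Tendsto (fun ε : ℝ => Real.exp ε * (a+1) / (a+1-ε)) (nhds 0) (nhds 1) := by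
    have h1 : ContinuousAt (fun ε : ℝ => Real.exp ε * (a+1) / (a+1-ε)) 0 := by
      apply ContinuousAt.div (by fun_prop) (by fun_prop)
      simpa using ha1.ne'
    have h2 : (a+1) / (a+1) = 1 := div_self ha1.ne'
    simpa [h2] using h1.tendsto
  have hψ : Tendsto (fun ε : ℝ => Real.exp (-ε) * (a+1) / (a+1+ε)) (nhds 0) (nhds 1) := by
    have h1 : ContinuousAt (fun ε : ℝ => Real.exp (-ε) * (a+1) / (a+1+ε)) 0 := by
      apply ContinuousAt.div (by fun_prop) (by fun_prop)
      simpa using ha1.ne'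
    have h2 : (a+1) / (a+1) = 1 := div_self ha1.ne'
    simpa [h2] using h1.tendsto
  have hev : ∀ᶠ ε in nhds (0:ℝ),
      (Real.exp ε * (a+1)/(a+1-ε) ≤ 1 + δ/4
        ∧ 1 - δ/4 ≤ Real.exp (-ε) * (a+1)/(a+1+ε)) ∧ |ε| < (a+1)/2 := by
    have e1 := hφ.eventually (eventually_le_nhds (show (1:ℝ) < 1 + δ/4 by linarith))
    have e2 := hψ.eventually (eventually_ge_nhds (show 1 - δ/4 < (1:ℝ) by linarith))
    have e3 : ∀ᶠ ε in nhds (0:ℝ), |ε| < (a+1)/2 := by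
      have : Tendsto (fun ε : ℝ => |ε|) (nhds 0) (nhds 0) := by
        simpa using continuous_abs.tendsto (0:ℝ)
      exact this.eventually (eventually_lt_nhds (by linarith))
    exact (e1.and e2).and e3
  have hexists := ((hev.filter_mono (nhdsWithin_le_nhds (s := Set.Ioi (0:ℝ)))).and
      (eventually_mem_nhdsWithin (s := Set.Ioi (0:ℝ)))).exists
  obtain ⟨ε, ⟨⟨hφε, hψε⟩, hεhalf⟩, hεpos'⟩ := hexists
  have hεpos : (0:ℝ) < ε := hεpos'
  have hεa : ε < (a+1)/2 := lt_of_abs_lt hεhalf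
  have hb1 : (0:ℝ) < a + 1 - ε := by linarith
  have hc1 : (0:ℝ) < a + 1 + ε := by linarith
  have hb : (-1:ℝ) < a - ε := by linarith
  have hc : (-1:ℝ) < a + ε := by linarith
  obtain ⟨T, hT1, hT⟩ := my_potter f hf hpos a hreg hεpos
  have hT0 : (0:ℝ) < T := by linarith
  set Fc := ∫ s in (0:ℝ)..T, f s with hFc
  have h0 : Tendsto (fun t => (a+1) * Fc / (t * f t)) atTop (nhds 0) :=
    Tendsto.div_atTop tendsto_const_nhds htft
  have hsmall2 : Tendsto (fun t : ℝ => T ^ (a+ε+1) * t ^ (-(a+ε+1))) atTop (nhds 0) := by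
    have h1 := (tendsto_rpow_neg_atTop (show (0:ℝ) < a+ε+1 by linarith)).const_mul
      (T ^ (a+ε+1))
    simpa using h1
  have hm1 := (Metric.tendsto_nhds.mp h0) (δ/8) (by positivity)
  have hm2 := (Metric.tendsto_nhds.mp hsmall2) (δ/8) (by positivity)
  rw [Filter.eventually_atTop] at hm1 hm2
  obtain ⟨N1, hN1⟩ := hm1
  obtain ⟨N2, hN2⟩ := hm2
  refine ⟨max (max T 1) (max N1 N2), fun t htN => ?_⟩
  have ht : T ≤ t := le_trans (le_trans (le_max_left _ _) (le_max_left _ _)) htN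
  have ht1 : (1:ℝ) ≤ t := le_trans (le_trans (le_max_right _ _) (le_max_left _ _)) htN
  have ht0 : (0:ℝ) < t := by linarith
  have hft := hpos t
  have htf : (0:ℝ) < t * f t := mul_pos ht0 hft
  have h0t : |(a+1) * Fc / (t * f t)| < δ/8 := by
    have := hN1 t (le_trans (le_trans (le_max_left _ _) (le_max_right _ _)) htN)
    rwa [Real.dist_eq, sub_zero] at this
  have hst : T ^ (a+ε+1) * t ^ (-(a+ε+1)) < δ/8 := by
    have := hN2 t (le_trans (le_trans (le_max_right _ _) (le_max_right _ _)) htN)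
    rw [Real.dist_eq, sub_zero] at this
    exact lt_of_abs_lt this
  set I := ∫ s in T..t, f s with hI
  have hdecomp : (∫ s in (0:ℝ)..t, f s) = Fc + I :=
    (integral_add_adjacent_intervals (hint 0 T) (hint T t)).symm
  -- upper bound
  have hIub : I ≤ Real.exp ε * f t * t / (a + 1 - ε) := by
    have hint2 : IntervalIntegrable (fun s : ℝ => Real.exp ε * (s/t) ^ (a-ε) * f t)
        volume T t := by
      apply ContinuousOn.intervalIntegrable
      apply ContinuousOn.mul (ContinuousOn.mul continuousOn_const ?_) continuousOn_const
      apply ContinuousOn.rpow_const (continuousOn_id.div_const t)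
      intro s hs
      left
      rw [Set.uIcc_of_le ht] at hs
      have h1s : (1:ℝ) ≤ s := le_trans hT1 hs.1
      positivity
    have hmono := integral_mono_on ht (hint T t) hint2 (fun s hs => (hT s t hs.1 hs.2).1)
    have hcomp : (∫ s in T..t, Real.exp ε * (s/t) ^ (a-ε) * f t)
        = Real.exp ε * f t / t ^ (a-ε) * ((t ^ (a-ε+1) - T ^ (a-ε+1)) / (a-ε+1)) := by
      have htb : (0:ℝ) < t ^ (a-ε) := Real.rpow_pos_of_pos ht0 _
      have hcong : Set.EqOn (fun s : ℝ => Real.exp ε * (s/t) ^ (a-ε) * f t)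
          (fun s : ℝ => (Real.exp ε * f t / t ^ (a-ε)) * s ^ (a-ε)) (Set.uIcc T t) := by
        intro s hs
        rw [Set.uIcc_of_le ht] at hs
        have hs0 : (0:ℝ) ≤ s := le_trans (by linarith) hs.1
        simp only
        rw [Real.div_rpow hs0 ht0.le]
        field_simp
      rw [intervalIntegral.integral_congr hcong, intervalIntegral.integral_const_mul,
        integral_rpow (Or.inl hb)]
    rw [hcomp] at hmono
    refine le_trans hmono ?_
    have htb : (0:ℝ) < t ^ (a-ε) := Real.rpow_pos_of_pos ht0 _
    have hTb1 : (0:ℝ) < T ^ (a-ε+1) := Real.rpow_pos_of_pos hT0 _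
    have heq : t ^ (a-ε+1) = t ^ (a-ε) * t := by
      rw [Real.rpow_add ht0, Real.rpow_one]
    have h1 : (t ^ (a-ε+1) - T ^ (a-ε+1)) / (a-ε+1) ≤ t ^ (a-ε) * t / (a-ε+1) := by
      apply div_le_div_of_nonneg_right ?_ (by linarith)
      rw [heq]; linarith
    calc Real.exp ε * f t / t ^ (a-ε) * ((t ^ (a-ε+1) - T ^ (a-ε+1)) / (a-ε+1))
        ≤ Real.exp ε * f t / t ^ (a-ε) * (t ^ (a-ε) * t / (a-ε+1)) := by
          apply mul_le_mul_of_nonneg_left h1 (by positivity)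
      _ = Real.exp ε * f t * t / (a + 1 - ε) := by
          have hne1 : t ^ (a-ε) ≠ 0 := htb.ne'
          have hne2 : a - ε + 1 ≠ 0 := ne_of_gt (by linarith : (0:ℝ) < a - ε + 1)
          have hne3 : a + 1 - ε ≠ 0 := hb1.ne'
          rw [show a + 1 - ε = a - ε + 1 by ring]
          field_simp
  -- lower bound
  have hIlb : Real.exp (-ε) * f t / t ^ (a+ε) * ((t ^ (a+ε+1) - T ^ (a+ε+1)) / (a+ε+1)) ≤ I := by
    have hint2 : IntervalIntegrable (fun s : ℝ => Real.exp (-ε) * (s/t) ^ (a+ε) * f t)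
        volume T t := by
      apply ContinuousOn.intervalIntegrable
      apply ContinuousOn.mul (ContinuousOn.mul continuousOn_const ?_) continuousOn_const
      apply ContinuousOn.rpow_const (continuousOn_id.div_const t)
      intro s hs
      left
      rw [Set.uIcc_of_le ht] at hs
      have h1s : (1:ℝ) ≤ s := le_trans hT1 hs.1
      positivity
    have hmono := integral_mono_on ht hint2 (hint T t) (fun s hs => (hT s t hs.1 hs.2).2)
    have hcomp : (∫ s in T..t, Real.exp (-ε) * (s/t) ^ (a+ε) * f t)
        = Real.exp (-ε) * f t / t ^ (a+ε) * ((t ^ (a+ε+1) - T ^ (a+ε+1)) / (a+ε+1)) := by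
      have htb : (0:ℝ) < t ^ (a+ε) := Real.rpow_pos_of_pos ht0 _
      have hcong : Set.EqOn (fun s : ℝ => Real.exp (-ε) * (s/t) ^ (a+ε) * f t)
          (fun s : ℝ => (Real.exp (-ε) * f t / t ^ (a+ε)) * s ^ (a+ε)) (Set.uIcc T t) := by
        intro s hs
        rw [Set.uIcc_of_le ht] at hs
        have hs0 : (0:ℝ) ≤ s := le_trans (by linarith) hs.1
        simp only
        rw [Real.div_rpow hs0 ht0.le]
        field_simp
      rw [intervalIntegral.integral_congr hcong, intervalIntegral.integral_const_mul,
        integral_rpow (Or.inl hc)]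
    rw [hcomp] at hmono
    exact hmono
  -- assemble
  have hup : (a+1) * I / (t * f t) ≤ Real.exp ε * (a+1) / (a+1-ε) := by
    calc (a+1) * I / (t * f t)
        ≤ (a+1) * (Real.exp ε * f t * t / (a+1-ε)) / (t * f t) := by gcongr
      _ = Real.exp ε * (a+1) / (a+1-ε) := by
          field_simp
  have hlo : (1 - δ/4) * (1 - T ^ (a+ε+1) * t ^ (-(a+ε+1))) ≤ (a+1) * I / (t * f t) := by
    have htc : (0:ℝ) < t ^ (a+ε+1) := Real.rpow_pos_of_pos ht0 _
    have hx : (a+1) * (Real.exp (-ε) * f t / t ^ (a+ε) * ((t ^ (a+ε+1) - T ^ (a+ε+1)) / (a+ε+1)))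
          / (t * f t)
        = Real.exp (-ε) * (a+1)/(a+1+ε) * (1 - T ^ (a+ε+1) * t ^ (-(a+ε+1))) := by
      have htneg : t ^ (-(a+ε+1)) = (t ^ (a+ε+1))⁻¹ := Real.rpow_neg ht0.le _
      have ht1e : t ^ (a+ε+1) = t ^ (a+ε) * t := by
        rw [Real.rpow_add ht0, Real.rpow_one]
      have htb : (0:ℝ) < t ^ (a+ε) := Real.rpow_pos_of_pos ht0 _
      have hne2 : a + ε + 1 ≠ 0 := ne_of_gt (by linarith : (0:ℝ) < a + ε + 1)
      have hne3 : t ^ (a+ε) ≠ 0 := htb.ne'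
      have hne4 : a + 1 + ε ≠ 0 := hc1.ne'
      have hne5 : f t ≠ 0 := hft.ne'
      have hne6 : t ≠ 0 := ht0.ne'
      rw [htneg, ht1e]
      field_simp
      ring
    have hxle1 : T ^ (a+ε+1) * t ^ (-(a+ε+1)) ≤ 1 := by
      have hTc : T ^ (a+ε+1) ≤ t ^ (a+ε+1) :=
        Real.rpow_le_rpow hT0.le ht (by linarith)
      have htneg : t ^ (-(a+ε+1)) = (t ^ (a+ε+1))⁻¹ := Real.rpow_neg ht0.le _
      rw [htneg]
      rw [← div_eq_mul_inv, div_le_one htc]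
      exact hTc
    calc (1 - δ/4) * (1 - T ^ (a+ε+1) * t ^ (-(a+ε+1)))
        ≤ Real.exp (-ε) * (a+1)/(a+1+ε) * (1 - T ^ (a+ε+1) * t ^ (-(a+ε+1))) := by
          apply mul_le_mul_of_nonneg_right hψε (by linarith)
      _ = (a+1) * (Real.exp (-ε) * f t / t ^ (a+ε) * ((t ^ (a+ε+1) - T ^ (a+ε+1)) / (a+ε+1)))
          / (t * f t) := hx.symm
      _ ≤ (a+1) * I / (t * f t) := by gcongr
  have hG : (a+1) * (∫ s in (0:ℝ)..t, f s) / (t * f t)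
      = (a+1)*Fc/(t*f t) + (a+1)*I/(t*f t) := by
    rw [hdecomp]; ring
  rw [hG, abs_lt]
  have habs0 := abs_lt.1 h0t
  have hx0 : 0 ≤ T ^ (a+ε+1) * t ^ (-(a+ε+1)) := by positivity
  have h2 : 1 - δ/4 - δ/8 ≤ (1 - δ/4) * (1 - T ^ (a+ε+1) * t ^ (-(a+ε+1))) :=
    my_arith1 hx0 hst hδ1 hδpos
  constructor
  · linarith [hlo, h2, habs0.1, hδpos]
  · linarith [hup, hφε, habs0.2, hδpos]


lemma my_karamata (f : ℝ → ℝ) (hf : Continuous f)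
    (hpos : ∀ᶠ t in atTop, 0 < f t)
    (a : ℝ) (ha : -1 < a)
    (hreg : ∀ x : ℝ, 0 < x → Tendsto (fun t => f (x * t) / f t) atTop (nhds (x ^ a))) :
    Tendsto (fun t => (a + 1) * (∫ s in (0:ℝ)..t, f s) / (t * f t)) atTop (nhds 1)
    ∧ Tendsto (fun t => t * f t) atTop atTop := by
  rw [eventually_atTop] at hpos
  obtain ⟨T₀', hT₀'⟩ := hpos
  set T₀ := max T₀' 1 with hT₀def
  have hT₀pos : ∀ t, T₀ ≤ t → 0 < f t := fun t ht => hT₀' t (le_trans (le_max_left _ _) ht)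
  set g : ℝ → ℝ := fun t => f (max t T₀) with hg
  have hgc : Continuous g := hf.comp (continuous_id.max continuous_const)
  have hgpos : ∀ t, 0 < g t := fun t => hT₀pos _ (le_max_right _ _)
  have hgeq : ∀ t, T₀ ≤ t → g t = f t := fun t ht => by simp [hg, max_eq_left ht]
  have hgreg : ∀ x : ℝ, 0 < x → Tendsto (fun t => g (x * t) / g t) atTop (nhds (x ^ a)) := by
    intro x hx
    apply Tendsto.congr' ?_ (hreg x hx)
    filter_upwards [eventually_ge_atTop T₀, eventually_ge_atTop (T₀ / x)] with t h1 h2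
    have hxt : T₀ ≤ x * t := by
      rw [div_le_iff₀ hx] at h2
      linarith
    rw [hgeq t h1, hgeq (x * t) hxt]
  have hkar := my_karamata_pos g hgc hgpos a ha hgreg
  have htg : Tendsto (fun t => t * g t) atTop atTop := my_tft g hgc hgpos a ha hgreg
  have htf : Tendsto (fun t => t * f t) atTop atTop := by
    apply Tendsto.congr' ?_ htg
    filter_upwards [eventually_ge_atTop T₀] with t h1
    rw [hgeq t h1]
  refine ⟨?_, htf⟩
  have hintf : ∀ p q : ℝ, IntervalIntegrable f volume p q :=
    fun p q => hf.intervalIntegrable p q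
  have hintg : ∀ p q : ℝ, IntervalIntegrable g volume p q :=
    fun p q => hgc.intervalIntegrable p q
  set C := (∫ s in (0:ℝ)..T₀, f s) - (∫ s in (0:ℝ)..T₀, g s) with hC
  have hFG : ∀ t, T₀ ≤ t → (∫ s in (0:ℝ)..t, f s) = (∫ s in (0:ℝ)..t, g s) + C := by
    intro t ht
    have h1 : (∫ s in (0:ℝ)..t, f s) = (∫ s in (0:ℝ)..T₀, f s) + ∫ s in T₀..t, f s :=
      (integral_add_adjacent_intervals (hintf 0 T₀) (hintf T₀ t)).symm
    have h2 : (∫ s in (0:ℝ)..t, g s) = (∫ s in (0:ℝ)..T₀, g s) + ∫ s in T₀..t, g s :=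
      (integral_add_adjacent_intervals (hintg 0 T₀) (hintg T₀ t)).symm
    have h3 : (∫ s in T₀..t, f s) = ∫ s in T₀..t, g s := by
      apply intervalIntegral.integral_congr
      intro s hs
      rw [Set.uIcc_of_le ht] at hs
      exact (hgeq s hs.1).symm
    rw [h1, h2, h3, hC]; ring
  have hCz : Tendsto (fun t => (a+1) * C / (t * g t)) atTop (nhds 0) :=
    Tendsto.div_atTop tendsto_const_nhds htg
  have hsum := hkar.add hCz
  rw [add_zero] at hsum
  apply Tendsto.congr' ?_ hsum
  filter_upwards [eventually_ge_atTop T₀, eventually_ge_atTop (1:ℝ)] with t h1 h1'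
  have hgt : g t = f t := hgeq t h1
  show (a + 1) * (∫ s in (0:ℝ)..t, g s) / (t * g t) + (a+1) * C / (t * g t)
      = (a + 1) * (∫ s in (0:ℝ)..t, f s) / (t * f t)
  rw [hFG t h1, hgt]
  ring

/-- If `γ` is continuous with `γ(t) ~ c²H(2H-1) t^(2H-2) L(t)` as `t → ∞`, where
`1/2 < H < 1`, `c > 0` and `L` is slowly varying and locally bounded, then
`Var(t) = 2∫₀ᵗ∫₀ᵛ γ(u) du dv` satisfies `Var(t) ~ c² t^(2H) L(t)`. -/
theorem stmt1 (γ : ℝ → ℝ) (hγ : Continuous γ)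
    (L : ℝ → ℝ) (hL0 : ∀ t, 0 ≤ L t)
    (hslow : ∀ x : ℝ, 0 < x →
      Tendsto (fun t : ℝ => L (x * t) / L t) atTop (nhds 1))
    (hloc : ∀ K : Set ℝ, IsCompact K → ∃ M : ℝ, ∀ t ∈ K, L t ≤ M)
    (H c : ℝ) (hH1 : 1 / 2 < H) (hH2 : H < 1) (hc : 0 < c)
    (hasymp : Tendsto
      (fun t : ℝ => γ t / (c ^ 2 * H * (2 * H - 1) * t ^ (2 * H - 2) * L t))
      atTop (nhds 1))
    (Var : ℝ → ℝ)
    (hVar : ∀ t : ℝ, Var t = 2 * ∫ v in (0:ℝ)..t, ∫ u in (0:ℝ)..v, γ u) :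
    Tendsto (fun t : ℝ => Var t / (c ^ 2 * t ^ (2 * H) * L t)) atTop (nhds 1) := by
  have hHpos : (0:ℝ) < H := by linarith
  have h2H1 : (0:ℝ) < 2 * H - 1 := by linarith
  -- eventual positivity of L and γ
  have hbig : ∀ᶠ t : ℝ in atTop,
      (1:ℝ)/2 < γ t / (c ^ 2 * H * (2 * H - 1) * t ^ (2 * H - 2) * L t) :=
    hasymp.eventually (eventually_gt_nhds (by norm_num))
  have hev : ∀ᶠ t : ℝ in atTop, 0 < L t ∧ 0 < γ t ∧ 0 < t := by
    filter_upwards [hbig, eventually_gt_atTop (0:ℝ)] with t h1 h2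
    have htp : (0:ℝ) < t ^ (2*H-2) := Real.rpow_pos_of_pos h2 _
    have hL : 0 < L t := by
      rcases lt_or_eq_of_le (hL0 t) with h | h
      · exact h
      · exfalso
        rw [← h] at h1
        simp at h1
        linarith
    have hd : (0:ℝ) < c ^ 2 * H * (2 * H - 1) * t ^ (2 * H - 2) * L t := by positivity
    have hγt : 0 < γ t := by
      rw [lt_div_iff₀ hd] at h1
      nlinarith
    exact ⟨hL, hγt, h2⟩
  obtain ⟨M, hM⟩ := eventually_atTop.1 hev
  -- γ is regularly varying of index 2H-2
  have hγreg : ∀ x : ℝ, 0 < x →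
      Tendsto (fun t => γ (x * t) / γ t) atTop (nhds (x ^ (2*H-2))) := by
    intro x hx
    have hmul : Tendsto (fun t : ℝ => x * t) atTop atTop :=
      Tendsto.const_mul_atTop hx tendsto_id
    have hA : Tendsto (fun t : ℝ =>
        γ (x*t) / (c ^ 2 * H * (2 * H - 1) * (x*t) ^ (2 * H - 2) * L (x*t)))
        atTop (nhds 1) := hasymp.comp hmul
    have hB : Tendsto (fun t : ℝ =>
        (γ t / (c ^ 2 * H * (2 * H - 1) * t ^ (2 * H - 2) * L t))⁻¹) atTop (nhds 1) := by
      simpa using hasymp.inv₀ one_ne_zero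
    have hC := hslow x hx
    have hprod := ((hA.mul hB).mul hC).mul
      (tendsto_const_nhds (x := x ^ (2*H-2)) (f := atTop (α := ℝ)))
    rw [one_mul, one_mul, one_mul] at hprod
    apply Tendsto.congr' ?_ hprod
    filter_upwards [eventually_ge_atTop M, eventually_ge_atTop (M / x),
      eventually_gt_atTop (0:ℝ)] with t h1 h2 ht0
    obtain ⟨hL1, hγ1, _⟩ := hM t h1
    obtain ⟨hL2, hγ2, _⟩ := hM (x*t) (by rw [div_le_iff₀ hx] at h2; linarith)
    have hxt : (x*t) ^ (2*H-2) = x ^ (2*H-2) * t ^ (2*H-2) :=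
      Real.mul_rpow hx.le ht0.le
    have htp : (0:ℝ) < t ^ (2*H-2) := Real.rpow_pos_of_pos ht0 _
    have hxp : (0:ℝ) < x ^ (2*H-2) := Real.rpow_pos_of_pos hx _
    show γ (x*t) / (c ^ 2 * H * (2 * H - 1) * (x*t) ^ (2 * H - 2) * L (x*t))
        * (γ t / (c ^ 2 * H * (2 * H - 1) * t ^ (2 * H - 2) * L t))⁻¹
        * (L (x*t) / L t) * x ^ (2*H-2) = γ (x*t) / γ t
    rw [hxt]
    field_simp
    ring_nf
    linear_combination inv_mul_cancel₀ (show (-1 + H * 2 : ℝ) ≠ 0 by linarith)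
  -- first Karamata application
  obtain ⟨hG1, htγ⟩ := my_karamata γ hγ
    (by filter_upwards [hev] with t h; exact h.2.1) (2*H-2) (by linarith) hγreg
  set F : ℝ → ℝ := fun v => ∫ u in (0:ℝ)..v, γ u with hF
  have hFc : Continuous F :=
    intervalIntegral.continuous_primitive (fun p q => hγ.intervalIntegrable p q) 0
  -- F is eventually positive
  have hFpos : ∀ᶠ t : ℝ in atTop, 0 < F t := by
    filter_upwards [hG1.eventually (eventually_gt_nhds (by norm_num : (1:ℝ)/2 < 1)),
      htγ.eventually_gt_atTop 0] with t hr htg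
    by_contra hcon
    push_neg at hcon
    have h1 : (2*H-2+1) * F t ≤ 0 :=
      mul_nonpos_of_nonneg_of_nonpos (by linarith) hcon
    have h2 : (2*H-2+1) * F t / (t * γ t) ≤ 0 := div_nonpos_iff.2 (Or.inr ⟨h1, htg.le⟩)
    linarith
  obtain ⟨M₂, hM₂⟩ := eventually_atTop.1 (hFpos.and (hev.and
    (hG1.eventually (eventually_ne_nhds one_ne_zero))))
  -- F is regularly varying of index 2H-1
  have hFreg : ∀ x : ℝ, 0 < x →
      Tendsto (fun t => F (x * t) / F t) atTop (nhds (x ^ (2*H-1))) := by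
    intro x hx
    have hmul : Tendsto (fun t : ℝ => x * t) atTop atTop :=
      Tendsto.const_mul_atTop hx tendsto_id
    have hA : Tendsto (fun t : ℝ => (2*H-2+1) * F (x*t) / ((x*t) * γ (x*t)))
        atTop (nhds 1) := hG1.comp hmul
    have hB : Tendsto (fun t : ℝ => ((2*H-2+1) * F t / (t * γ t))⁻¹) atTop (nhds 1) := by
      simpa using hG1.inv₀ one_ne_zero
    have hγx := hγreg x hx
    have hprod := ((hA.mul hB).mul hγx).mul
      (tendsto_const_nhds (x := x) (f := atTop (α := ℝ)))
    rw [one_mul, one_mul] at hprod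
    have hxpow : x ^ (2*H-2) * x = x ^ (2*H-1) := by
      rw [show 2*H-1 = (2*H-2) + 1 by ring, Real.rpow_add hx, Real.rpow_one]
    rw [hxpow] at hprod
    apply Tendsto.congr' ?_ hprod
    filter_upwards [eventually_ge_atTop M₂, eventually_ge_atTop (M₂ / x),
      eventually_gt_atTop (0:ℝ)] with t h1 h2 ht0
    obtain ⟨hF1, ⟨hL1, hγ1, _⟩, _⟩ := hM₂ t h1
    obtain ⟨hF2, ⟨hL2, hγ2, _⟩, _⟩ := hM₂ (x*t) (by rw [div_le_iff₀ hx] at h2; linarith)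
    show (2*H-2+1) * F (x*t) / ((x*t) * γ (x*t))
        * ((2*H-2+1) * F t / (t * γ t))⁻¹ * (γ (x*t) / γ t) * x = F (x*t) / F t
    have h2H1' : (2*H-2+1) ≠ 0 := by intro hh; nlinarith
    field_simp
    ring_nf
    linear_combination inv_mul_cancel₀ (show (-1 + H * 2 : ℝ) ≠ 0 by linarith)
  -- second Karamata application
  obtain ⟨hG2, htF⟩ := my_karamata F hFc hFpos (2*H-1) (by linarith) hFreg
  -- assemble
  have hfin := (hG2.mul hG1).mul hasymp
  rw [one_mul, one_mul] at hfin
  apply Tendsto.congr' ?_ hfin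
  filter_upwards [eventually_ge_atTop M₂, eventually_gt_atTop (0:ℝ)] with t h1 ht0
  obtain ⟨hFt, ⟨hLt, hγt, _⟩, _⟩ := hM₂ t h1
  show (2*H-1+1) * (∫ s in (0:ℝ)..t, F s) / (t * F t)
      * ((2*H-2+1) * F t / (t * γ t))
      * (γ t / (c ^ 2 * H * (2 * H - 1) * t ^ (2 * H - 2) * L t))
      = Var t / (c ^ 2 * t ^ (2 * H) * L t)
  rw [hVar t]
  have ht2 : t ^ (2*H) = t ^ (2*H-2) * t * t := by
    have e1 : t ^ (2*H-2) * t * t = t ^ (2*H-2) * t ^ (1:ℝ) * t ^ (1:ℝ) := by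
      rw [Real.rpow_one]
    rw [e1, ← Real.rpow_add ht0, ← Real.rpow_add ht0]
    congr 1
    ring
  rw [ht2]
  have htp : (0:ℝ) < t ^ (2*H-2) := Real.rpow_pos_of_pos ht0 _
  field_simp
  ring
end
end

section
/- Let F and G be distribution functions on ℝ≥0, with 1-F(t) ~ t^(-α) L(t) for some α ∈ (1,2) and L slowly varying, and 1-G(t) = o(1-F(t)). Then 1 - (F*G)(t) ~ 1 - F(t) as t → ∞, where F*G denotes the convolution. -/
open scoped ENNReal

open Filter MeasureTheory

private lemma aux_pos {μF : Measure ℝ} {α : ℝ} {L : ℝ → ℝ} (hL0 : ∀ t, 0 ≤ L t)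
    (hF : Tendsto (fun t : ℝ => (μF (Set.Ioi t)).toReal / (t ^ (-α) * L t)) atTop (nhds 1)) :
    ∀ᶠ t : ℝ in atTop, 0 < (μF (Set.Ioi t)).toReal ∧ 0 < t ^ (-α) * L t := by
  have h1 : ∀ᶠ t : ℝ in atTop,
      (1:ℝ)/2 < (μF (Set.Ioi t)).toReal / (t ^ (-α) * L t) :=
    hF.eventually (eventually_gt_nhds (by norm_num))
  filter_upwards [h1, eventually_gt_atTop (0:ℝ)] with t ht ht0
  have hd0 : 0 ≤ t ^ (-α) * L t :=
    mul_nonneg (Real.rpow_nonneg ht0.le _) (hL0 t)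
  have hd : 0 < t ^ (-α) * L t := by
    rcases hd0.lt_or_eq with h | h
    · exact h
    · rw [← h, div_zero] at ht; norm_num at ht
  refine ⟨?_, hd⟩
  have hf0 : (0:ℝ) ≤ (μF (Set.Ioi t)).toReal := ENNReal.toReal_nonneg
  rcases hf0.lt_or_eq with h | h
  · exact h
  · rw [← h, zero_div] at ht; norm_num at ht

private lemma aux_ratio {μF : Measure ℝ} {α : ℝ} {L : ℝ → ℝ} (hL0 : ∀ t, 0 ≤ L t)
    (hslow : ∀ x : ℝ, 0 < x → Tendsto (fun t : ℝ => L (x * t) / L t) atTop (nhds 1))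
    (hF : Tendsto (fun t : ℝ => (μF (Set.Ioi t)).toReal / (t ^ (-α) * L t)) atTop (nhds 1))
    {c : ℝ} (hc : 0 < c) :
    Tendsto (fun t : ℝ => (μF (Set.Ioi (c * t))).toReal / (μF (Set.Ioi t)).toReal)
      atTop (nhds (c ^ (-α))) := by
  have hmul : Tendsto (fun t : ℝ => c * t) atTop atTop :=
    Tendsto.const_mul_atTop hc tendsto_id
  have hA := hF.comp hmul
  have hB := hF.inv₀ one_ne_zero
  simp only [inv_div, inv_one] at hB
  have hC := hslow c hc
  have hprod := (hA.mul ((tendsto_const_nhds : Tendsto _ atTop (nhds (c ^ (-α)))).mul hC)).mul hB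
  rw [one_mul, mul_one, mul_one] at hprod
  refine hprod.congr' ?_
  have hpos := aux_pos hL0 hF
  filter_upwards [hpos, hmul.eventually hpos, eventually_gt_atTop (0:ℝ)]
    with t hp hpc ht
  obtain ⟨hf, hd⟩ := hp
  obtain ⟨hfc, hdc⟩ := hpc
  have htα : (0:ℝ) < t ^ (-α) := Real.rpow_pos_of_pos ht _
  have hctα : (0:ℝ) < (c * t) ^ (-α) := Real.rpow_pos_of_pos (by positivity) _
  have hLt : 0 < L t := by
    rcases (hL0 t).lt_or_eq with h | h
    · exact h
    · rw [← h, mul_zero] at hd; exact absurd hd (lt_irrefl 0)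
  have hLct : 0 < L (c * t) := by
    rcases (hL0 (c * t)).lt_or_eq with h | h
    · exact h
    · rw [← h, mul_zero] at hdc; exact absurd hdc (lt_irrefl 0)
  have hsplit : (c * t) ^ (-α) = c ^ (-α) * t ^ (-α) := Real.mul_rpow hc.le ht.le
  simp only [Function.comp]
  rw [hsplit]
  have hcα : (0:ℝ) < c ^ (-α) := Real.rpow_pos_of_pos hc _
  field_simp

/-- If `F`, `G` are distributions on `ℝ≥0`, `1 - F(t) ~ t^(-α) L(t)` with `α ∈ (1,2)` and
`L` slowly varying, and `1 - G(t) = o(1 - F(t))`, then `1 - (F*G)(t) ~ 1 - F(t)`. -/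
theorem stmt5 (μF μG : Measure ℝ)
    [IsProbabilityMeasure μF] [IsProbabilityMeasure μG]
    (hsuppF : μF (Set.Iio 0) = 0) (hsuppG : μG (Set.Iio 0) = 0)
    (α : ℝ) (hα1 : 1 < α) (hα2 : α < 2)
    (L : ℝ → ℝ) (hL0 : ∀ t, 0 ≤ L t)
    (hslow : ∀ x : ℝ, 0 < x →
      Tendsto (fun t : ℝ => L (x * t) / L t) atTop (nhds 1))
    (hF : Tendsto (fun t : ℝ => (μF (Set.Ioi t)).toReal / (t ^ (-α) * L t))
      atTop (nhds 1))
    (hG : Tendsto (fun t : ℝ => (μG (Set.Ioi t)).toReal / (μF (Set.Ioi t)).toReal)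
      atTop (nhds 0)) :
    Tendsto (fun t : ℝ =>
        ((μF.conv μG) (Set.Ioi t)).toReal / (μF (Set.Ioi t)).toReal)
      atTop (nhds 1) := by
  have hα0 : (0:ℝ) < α := by linarith
  -- measurable addition map
  have hmeas : Measurable fun p : ℝ × ℝ => p.1 + p.2 := measurable_add
  have hGIci : μG (Set.Ici (0:ℝ)) = 1 := by
    refine le_antisymm prob_le_one ?_
    calc (1:ℝ≥0∞) = μG Set.univ := measure_univ.symm
      _ = μG (Set.Iio 0 ∪ Set.Ici 0) := by rw [Set.Iio_union_Ici]
      _ ≤ μG (Set.Iio 0) + μG (Set.Ici 0) := measure_union_le _ _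
      _ = μG (Set.Ici 0) := by rw [hsuppG, zero_add]
  -- lower bound: tail of convolution ≥ tail of F
  have hconv_ge : ∀ t : ℝ, μF (Set.Ioi t) ≤ (μF.conv μG) (Set.Ioi t) := by
    intro t
    rw [Measure.conv, Measure.map_apply hmeas measurableSet_Ioi]
    calc μF (Set.Ioi t) = μF (Set.Ioi t) * μG (Set.Ici 0) := by rw [hGIci, mul_one]
      _ = (μF.prod μG) (Set.Ioi t ×ˢ Set.Ici 0) := (Measure.prod_prod _ _).symm
      _ ≤ (μF.prod μG) ((fun p : ℝ × ℝ => p.1 + p.2) ⁻¹' Set.Ioi t) := by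
          refine measure_mono ?_
          rintro ⟨x, y⟩ ⟨hx, hy⟩
          simp only [Set.mem_preimage, Set.mem_Ioi] at *
          have : (0:ℝ) ≤ y := hy
          linarith [hx]
  -- upper bound
  have hconv_le : ∀ c : ℝ, ∀ t : ℝ,
      (μF.conv μG) (Set.Ioi t) ≤ μF (Set.Ioi (c * t)) + μG (Set.Ioi ((1 - c) * t)) := by
    intro c t
    rw [Measure.conv, Measure.map_apply hmeas measurableSet_Ioi]
    have hsub : (fun p : ℝ × ℝ => p.1 + p.2) ⁻¹' Set.Ioi t ⊆
        (Set.Ioi (c * t) ×ˢ (Set.univ : Set ℝ)) ∪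
        ((Set.univ : Set ℝ) ×ˢ Set.Ioi ((1 - c) * t)) := by
      rintro ⟨x, y⟩ hp
      simp only [Set.mem_preimage, Set.mem_Ioi, Set.mem_union, Set.mem_prod,
        Set.mem_univ, and_true, true_and] at *
      by_contra hcon
      push_neg at hcon
      obtain ⟨h1, h2⟩ := hcon
      nlinarith
    calc (μF.prod μG) ((fun p : ℝ × ℝ => p.1 + p.2) ⁻¹' Set.Ioi t)
        ≤ (μF.prod μG) ((Set.Ioi (c * t) ×ˢ (Set.univ : Set ℝ)) ∪
            ((Set.univ : Set ℝ) ×ˢ Set.Ioi ((1 - c) * t))) := measure_mono hsub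
      _ ≤ (μF.prod μG) (Set.Ioi (c * t) ×ˢ (Set.univ : Set ℝ)) +
            (μF.prod μG) ((Set.univ : Set ℝ) ×ˢ Set.Ioi ((1 - c) * t)) :=
          measure_union_le _ _
      _ = μF (Set.Ioi (c * t)) + μG (Set.Ioi ((1 - c) * t)) := by
          rw [Measure.prod_prod, Measure.prod_prod, measure_univ, measure_univ,
            mul_one, one_mul]
  -- real-valued tails
  set f : ℝ → ℝ := fun t => (μF (Set.Ioi t)).toReal with hf_def
  set g : ℝ → ℝ := fun t => (μG (Set.Ioi t)).toReal with hg_def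
  set h : ℝ → ℝ := fun t => ((μF.conv μG) (Set.Ioi t)).toReal with hh_def
  have hpos : ∀ᶠ t : ℝ in atTop, 0 < f t ∧ 0 < t ^ (-α) * L t := aux_pos hL0 hF
  have hfh : ∀ t : ℝ, f t ≤ h t := fun t =>
    ENNReal.toReal_mono (measure_ne_top _ _) (hconv_ge t)
  have hlow : ∀ᶠ t : ℝ in atTop, 1 ≤ h t / f t := by
    filter_upwards [hpos] with t ⟨hft, _⟩
    exact (one_le_div hft).mpr (hfh t)
  rw [tendsto_order]
  constructor
  · intro a ha
    filter_upwards [hlow] with t ht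
    linarith
  · intro b hb
    -- choose c ∈ (0,1) with c ^ (-α) < b
    set c : ℝ := (1 + b ^ (-(1/α))) / 2 with hc_def
    have hbα : (0:ℝ) < b ^ (-(1/α)) := Real.rpow_pos_of_pos (by linarith) _
    have hbα1 : b ^ (-(1/α)) < 1 :=
      Real.rpow_lt_one_of_one_lt_of_neg hb (neg_lt_zero.mpr (by positivity))
    have hc0 : 0 < c := by rw [hc_def]; linarith
    have hc1 : c < 1 := by rw [hc_def]; linarith
    have hbc : b ^ (-(1/α)) < c := by rw [hc_def]; linarith
    have hcb : c ^ (-α) < b := by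
      have h1 : c ^ (-α) < (b ^ (-(1/α))) ^ (-α) :=
        Real.rpow_lt_rpow_of_neg hbα hbc (by linarith)
      have hexp : (-(1/α)) * (-α) = 1 := by field_simp
      have h2 : (b ^ (-(1/α))) ^ (-α) = b := by
        rw [← Real.rpow_mul (by linarith : (0:ℝ) ≤ b), hexp, Real.rpow_one]
      rw [h2] at h1; exact h1
    have h1c : (0:ℝ) < 1 - c := by linarith
    -- the two ratio limits
    have hR1 := aux_ratio hL0 hslow hF hc0
    have hR2 : Tendsto (fun t : ℝ => g ((1 - c) * t) / f t) atTop (nhds 0) := by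
      have hmul : Tendsto (fun t : ℝ => (1 - c) * t) atTop atTop :=
        Tendsto.const_mul_atTop h1c tendsto_id
      have hgf := hG.comp hmul
      have hff := aux_ratio hL0 hslow hF h1c
      have := hgf.mul hff
      rw [zero_mul] at this
      refine this.congr' ?_
      filter_upwards [hmul.eventually hpos, hpos] with t hfc hft
      obtain ⟨hfc1, -⟩ := hfc
      obtain ⟨hft1, -⟩ := hft
      simp only [Function.comp]
      rw [div_mul_div_comm, mul_comm (f ((1-c)*t)) (f t),
        mul_div_mul_right _ _ hfc1.ne']
    have hsum := hR1.add hR2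
    have hlt : c ^ (-α) + 0 < b := by rw [add_zero]; exact hcb
    have hev : ∀ᶠ t : ℝ in atTop,
        f (c * t) / f t + g ((1 - c) * t) / f t < b :=
      hsum.eventually (eventually_lt_nhds hlt)
    filter_upwards [hev, hpos] with t ht ⟨hft, _⟩
    have hhle : h t ≤ f (c * t) + g ((1 - c) * t) := by
      have h2 := ENNReal.toReal_mono
        (ENNReal.add_ne_top.mpr ⟨measure_ne_top _ _, measure_ne_top _ _⟩)
        (hconv_le c t)
      rwa [ENNReal.toReal_add (measure_ne_top _ _) (measure_ne_top _ _)] at h2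
    calc h t / f t ≤ (f (c * t) + g ((1 - c) * t)) / f t := by gcongr
      _ = f (c * t) / f t + g ((1 - c) * t) / f t := add_div _ _ _
      _ < b := ht
end

section
/- Let h : ℝ≥0 → [0,1] be non-increasing with h(0) = 1 (so g = 1 - h is a distribution function), and let F* be a distribution function on ℝ≥0. Suppose F* admits a bounded continuous density f* and h is absolutely continuous with bounded continuous density h' ≤ 0. Define z(t) = ∫₀ᵗ h(t-s) F*(ds). Then z is absolutely continuous with derivative z'(t) = f*(t) + ∫₀ᵗ h'(t-s) f*(s) ds, and the total variation of z on [t, ∞), namely ∫ₜ^∞ |z'(s)| ds, is at most (1 - F*(t)) + (1 - (g * F*)(t)). -/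
open Filter MeasureTheory intervalIntegral Set

lemma fubini_triangle (fstar h' : ℝ → ℝ) (hfc : Continuous fstar) (hh'c : Continuous h')
    {t : ℝ} (ht : 0 ≤ t) :
    ∫ s in (0:ℝ)..t, (∫ u in (0:ℝ)..(t-s), h' u) * fstar s
      = ∫ v in (0:ℝ)..t, ∫ s in (0:ℝ)..v, h' (v - s) * fstar s := by
  obtain ⟨M1, hM1⟩ := (isCompact_Icc (a := (0:ℝ)) (b := t)).exists_bound_of_continuousOn
    hh'c.continuousOn
  obtain ⟨M2, hM2⟩ := (isCompact_Icc (a := (0:ℝ)) (b := t)).exists_bound_of_continuousOn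
    hfc.continuousOn
  set Φ : ℝ → ℝ → ℝ := fun s v => if v ∈ Ioc s t then h' (v - s) * fstar s else 0 with hΦ
  have huncurry : Function.uncurry Φ =
      fun p : ℝ × ℝ => if p.1 < p.2 ∧ p.2 ≤ t then h' (p.2 - p.1) * fstar p.1 else 0 := by
    ext p; simp [Function.uncurry, hΦ, Set.mem_Ioc]
  have hΦmeas : Measurable (Function.uncurry Φ) := by
    rw [huncurry]
    refine Measurable.ite ?_ ?_ measurable_const
    · exact (measurableSet_lt measurable_fst measurable_snd).inter
        (measurable_snd measurableSet_Iic)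
    · exact ((hh'c.comp (continuous_snd.sub continuous_fst)).mul
        (hfc.comp continuous_fst)).measurable
  have hfinite : IsFiniteMeasure (volume.restrict (Ioc (0:ℝ) t)) :=
    ⟨by rw [Measure.restrict_apply_univ]; exact measure_Ioc_lt_top⟩
  haveI := hfinite
  have hint : Integrable (Function.uncurry Φ)
      ((volume.restrict (Ioc (0:ℝ) t)).prod (volume.restrict (Ioc (0:ℝ) t))) := by
    refine Integrable.mono' (integrable_const (|M1| * |M2|))
      hΦmeas.aestronglyMeasurable ?_
    rw [Measure.prod_restrict]
    filter_upwards [ae_restrict_mem (measurableSet_Ioc.prod measurableSet_Ioc)] with p hp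
    obtain ⟨hp1, hp2⟩ := hp
    rw [huncurry]
    dsimp only
    by_cases hc : p.1 < p.2 ∧ p.2 ≤ t
    · rw [if_pos hc, Real.norm_eq_abs, abs_mul]
      have h1 : |h' (p.2 - p.1)| ≤ |M1| := by
        refine le_trans ?_ (le_abs_self M1)
        have : p.2 - p.1 ∈ Icc (0:ℝ) t :=
          ⟨by linarith [hc.1], by linarith [hp1.1, hp2.2]⟩
        simpa [Real.norm_eq_abs] using hM1 _ this
      have h2 : |fstar p.1| ≤ |M2| := by
        refine le_trans ?_ (le_abs_self M2)
        have : p.1 ∈ Icc (0:ℝ) t := ⟨hp1.1.le, hp1.2⟩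
        simpa [Real.norm_eq_abs] using hM2 _ this
      exact mul_le_mul h1 h2 (abs_nonneg _) (abs_nonneg _)
    · rw [if_neg hc, norm_zero]
      positivity
  -- step 1 : LHS as double set integral
  have step1 : ∫ s in (0:ℝ)..t, (∫ u in (0:ℝ)..(t-s), h' u) * fstar s
      = ∫ s in Ioc (0:ℝ) t, ∫ v in Ioc (0:ℝ) t, Φ s v := by
    rw [intervalIntegral.integral_of_le ht]
    refine setIntegral_congr_fun measurableSet_Ioc (fun s hs => ?_)
    have hst : s ≤ t := hs.2
    have key : (∫ u in (0:ℝ)..(t-s), h' u) = ∫ v in Ioc s t, h' (v - s) := by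
      rw [← intervalIntegral.integral_of_le hst]
      rw [intervalIntegral.integral_comp_sub_right (fun x => h' x) s]
      norm_num
    rw [key]
    have hsub : Ioc s t ⊆ Ioc 0 t := Ioc_subset_Ioc hs.1.le le_rfl
    have : ∫ v in Ioc (0:ℝ) t, Φ s v
        = ∫ v in Ioc s t, h' (v - s) * fstar s := by
      have : ∀ v, Φ s v = (Ioc s t).indicator (fun v => h' (v - s) * fstar s) v := by
        intro v; simp [hΦ, Set.indicator]
      simp_rw [this]
      rw [setIntegral_indicator measurableSet_Ioc, inter_eq_right.mpr hsub]
    rw [this, ← MeasureTheory.integral_mul_const]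
  -- step 2 : swap
  have step2 : ∫ s in Ioc (0:ℝ) t, ∫ v in Ioc (0:ℝ) t, Φ s v
      = ∫ v in Ioc (0:ℝ) t, ∫ s in Ioc (0:ℝ) t, Φ s v :=
    integral_integral_swap hint
  -- step 3 : inner integral equals q v
  have step3 : ∫ v in Ioc (0:ℝ) t, ∫ s in Ioc (0:ℝ) t, Φ s v
      = ∫ v in (0:ℝ)..t, ∫ s in (0:ℝ)..v, h' (v - s) * fstar s := by
    rw [intervalIntegral.integral_of_le ht]
    refine setIntegral_congr_fun measurableSet_Ioc (fun v hv => ?_)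
    have h1 : ∀ s, Φ s v = (Iio v).indicator (fun s => h' (v - s) * fstar s) s := by
      intro s
      simp only [hΦ, Set.indicator, Set.mem_Iio, Set.mem_Ioc]
      by_cases hc : s < v
      · simp [hc, hv.2]
      · simp [hc]
    simp_rw [h1]
    rw [setIntegral_indicator measurableSet_Iio]
    have : Ioc 0 t ∩ Iio v = Ioo 0 v := by
      ext x
      simp only [Set.mem_inter_iff, Set.mem_Iio, Set.mem_Ioc, Set.mem_Ioo]
      constructor
      · rintro ⟨⟨hx0, _⟩, hx⟩; exact ⟨hx0, hx⟩
      · rintro ⟨hx0, hxv⟩; exact ⟨⟨hx0, le_trans hxv.le hv.2⟩, hxv⟩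
    rw [this, ← integral_Ioc_eq_integral_Ioo, ← intervalIntegral.integral_of_le hv.1.le]
  rw [step1, step2, step3]

/-- Let `F*` be a distribution on `ℝ≥0` with bounded continuous density `f*`, and let
`h : ℝ≥0 → [0,1]` be non-increasing with `h 0 = 1`, absolutely continuous with bounded
continuous nonpositive density `h'`. Then `z(t) = ∫₀ᵗ h(t-s) f*(s) ds` is differentiable
with `z'(t) = f*(t) + ∫₀ᵗ h'(t-s) f*(s) ds`, and its total variation on `[t,∞)` is at
most `(1 - F*(t)) + (1 - (g*F*)(t))` where `g = 1 - h`. -/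
theorem stmt13 (fstar : ℝ → ℝ) (hfc : Continuous fstar) (hfnn : ∀ t, 0 ≤ fstar t)
    (hfbdd : ∃ M : ℝ, ∀ t, fstar t ≤ M)
    (hfprob : ∫ s in Set.Ici (0:ℝ), fstar s = 1)
    (h : ℝ → ℝ) (hh0 : h 0 = 1) (hhmono : AntitoneOn h (Set.Ici 0))
    (hhrange : ∀ t : ℝ, 0 ≤ t → 0 ≤ h t ∧ h t ≤ 1)
    (h' : ℝ → ℝ) (hh'c : Continuous h') (hh'np : ∀ t, h' t ≤ 0)
    (hh'bdd : ∃ M : ℝ, ∀ t, |h' t| ≤ M)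
    (habs : ∀ t : ℝ, 0 ≤ t → h t = 1 + ∫ s in (0:ℝ)..t, h' s)
    (z : ℝ → ℝ) (hz : ∀ t : ℝ, z t = ∫ s in (0:ℝ)..t, h (t - s) * fstar s) :
    (∀ t : ℝ, 0 < t →
      HasDerivAt z (fstar t + ∫ s in (0:ℝ)..t, h' (t - s) * fstar s) t) ∧
    ∀ t : ℝ, 0 ≤ t →
      (∫ s in Set.Ioi t, |deriv z s|) ≤
        (1 - ∫ s in (0:ℝ)..t, fstar s) +
          (1 - ∫ s in (0:ℝ)..t, (1 - h (t - s)) * fstar s) := by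
  -- auxiliary functions
  set H : ℝ → ℝ := fun u => 1 + ∫ x in (0:ℝ)..u, h' x with hHdef
  have hHc : Continuous H := by
    apply continuous_const.add
    exact intervalIntegral.continuous_primitive (fun a b => hh'c.intervalIntegrable a b) 0
  have hHeq : ∀ u : ℝ, 0 ≤ u → h u = H u := fun u hu => habs u hu
  set q : ℝ → ℝ := fun v => ∫ s in (0:ℝ)..v, h' (v - s) * fstar s with hqdef
  have hqc : Continuous q := by
    apply continuous_parametric_intervalIntegral_of_continuous
      (f := fun v s => h' (v - s) * fstar s) (μ := volume) (a₀ := (0:ℝ))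
    · exact ((hh'c.comp (continuous_fst.sub continuous_snd)).mul (hfc.comp continuous_snd))
    · exact continuous_id
  set F : ℝ → ℝ := fun u => ∫ x in (0:ℝ)..u, fstar x with hFdef
  set Z : ℝ → ℝ := fun u => ∫ v in (0:ℝ)..u, (fstar v + q v) with hZdef
  -- representation of the H-convolution
  have hrepH : ∀ u : ℝ, 0 ≤ u → (∫ s in (0:ℝ)..u, H (u - s) * fstar s) = Z u := by
    intro u hu
    have e2 : (∫ s in (0:ℝ)..u, H (u - s) * fstar s)
        = ∫ s in (0:ℝ)..u, (fstar s + (∫ x in (0:ℝ)..(u - s), h' x) * fstar s) := by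
      refine intervalIntegral.integral_congr (fun s _ => ?_)
      simp only [hHdef]; ring
    have hcont2 : Continuous fun s => (∫ x in (0:ℝ)..(u - s), h' x) * fstar s := by
      refine Continuous.mul ?_ hfc
      apply continuous_parametric_intervalIntegral_of_continuous
        (f := fun _ x => h' x) (μ := volume) (a₀ := (0:ℝ))
      · exact hh'c.comp continuous_snd
      · exact continuous_const.sub continuous_id
    rw [e2, intervalIntegral.integral_add (hfc.intervalIntegrable 0 u)
      (hcont2.intervalIntegrable 0 u),
      fubini_triangle fstar h' hfc hh'c hu]
    have : Z u = ∫ v in (0:ℝ)..u, (fstar v + q v) := rfl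
    rw [this, intervalIntegral.integral_add (hfc.intervalIntegrable 0 u)
      (hqc.intervalIntegrable 0 u)]
  have hrep : ∀ u : ℝ, 0 ≤ u → z u = Z u := by
    intro u hu
    rw [hz, ← hrepH u hu]
    refine intervalIntegral.integral_congr (fun s hs => ?_)
    rw [Set.uIcc_of_le hu] at hs
    rw [hHeq _ (by linarith [hs.1, hs.2] : (0:ℝ) ≤ u - s)]
  have hZderiv : ∀ u : ℝ, HasDerivAt Z (fstar u + q u) u := by
    intro u
    exact intervalIntegral.integral_hasDerivAt_right
      ((hfc.add hqc).intervalIntegrable 0 u)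
      ((hfc.add hqc).stronglyMeasurableAtFilter volume (nhds u))
      (hfc.add hqc).continuousAt
  have hderiv : ∀ t : ℝ, 0 < t → HasDerivAt z (fstar t + q t) t := by
    intro t htpos
    have hev : z =ᶠ[nhds t] Z := by
      filter_upwards [eventually_gt_nhds htpos] with x hx
      exact hrep x hx.le
    exact (hZderiv t).congr_of_eventuallyEq hev
  constructor
  · exact hderiv
  -- second part
  intro t ht
  have hfint : IntegrableOn fstar (Set.Ici 0) := by
    by_contra hcon
    rw [MeasureTheory.integral_undef hcon] at hfprob
    norm_num at hfprob
  have hqnonpos : ∀ v : ℝ, 0 ≤ v → q v ≤ 0 := by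
    intro v hv
    have : (0:ℝ) ≤ ∫ s in (0:ℝ)..v, -(h' (v - s) * fstar s) := by
      refine intervalIntegral.integral_nonneg hv (fun u _ => ?_)
      have := mul_nonpos_of_nonpos_of_nonneg (hh'np (v - u)) (hfnn u)
      linarith
    rw [intervalIntegral.integral_neg] at this
    simpa [hqdef] using this
  -- w v = F v - Z v
  have hwz : ∀ v : ℝ, 0 ≤ v →
      (∫ s in (0:ℝ)..v, (1 - h (v - s)) * fstar s) = F v - Z v := by
    intro v hv
    have e1 : (∫ s in (0:ℝ)..v, (1 - h (v - s)) * fstar s)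
        = ∫ s in (0:ℝ)..v, (fstar s - H (v - s) * fstar s) := by
      refine intervalIntegral.integral_congr (fun s hs => ?_)
      rw [Set.uIcc_of_le hv] at hs
      rw [hHeq _ (by linarith [hs.1, hs.2] : (0:ℝ) ≤ v - s)]
      ring
    have hcont3 : Continuous fun s => H (v - s) * fstar s :=
      (hHc.comp (continuous_const.sub continuous_id)).mul hfc
    rw [e1, intervalIntegral.integral_sub (hfc.intervalIntegrable 0 v)
      (hcont3.intervalIntegrable 0 v), hrepH v hv]
  have hZnn : ∀ v : ℝ, 0 ≤ v → 0 ≤ Z v := by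
    intro v hv
    rw [← hrepH v hv]
    refine intervalIntegral.integral_nonneg hv (fun u hu => ?_)
    have h1 : (0:ℝ) ≤ v - u := by linarith [hu.1, hu.2]
    have := (hhrange (v - u) h1).1
    rw [hHeq _ h1] at this
    exact mul_nonneg this (hfnn u)
  have hFle : ∀ v : ℝ, 0 ≤ v → F v ≤ 1 := by
    intro v hv
    have : F v = ∫ s in Set.Ioc 0 v, fstar s := intervalIntegral.integral_of_le hv
    rw [this, ← hfprob]
    exact setIntegral_mono_set hfint
      (Eventually.of_forall (fun x => hfnn x))
      (HasSubset.Subset.eventuallyLE (fun x hx => le_of_lt hx.1))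
  -- key interval bound
  have key : ∀ T : ℝ, t ≤ T → (∫ v in t..T, -q v) ≤ 1 - (F t - Z t) := by
    intro T hT
    have h0T : (0:ℝ) ≤ T := le_trans ht hT
    have i1 : IntervalIntegrable fstar volume 0 t := hfc.intervalIntegrable 0 t
    have i2 : IntervalIntegrable fstar volume t T := hfc.intervalIntegrable t T
    have i3 : IntervalIntegrable (fun v => fstar v + q v) volume 0 t :=
      (hfc.add hqc).intervalIntegrable 0 t
    have i4 : IntervalIntegrable (fun v => fstar v + q v) volume t T :=
      (hfc.add hqc).intervalIntegrable t T
    have a1 : F t + ∫ v in t..T, fstar v = F T :=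
      intervalIntegral.integral_add_adjacent_intervals i1 i2
    have a2 : Z t + ∫ v in t..T, (fstar v + q v) = Z T :=
      intervalIntegral.integral_add_adjacent_intervals i3 i4
    have e : (∫ v in t..T, -q v)
        = (∫ v in t..T, fstar v) - ∫ v in t..T, (fstar v + q v) := by
      rw [← intervalIntegral.integral_sub i2 i4]
      refine intervalIntegral.integral_congr (fun s _ => ?_)
      ring
    have hFT : F T - Z T ≤ 1 := by
      have := hZnn T h0T
      have := hFle T h0T
      linarith
    rw [e]
    linarith
  -- integrability of -q on Ioi t
  have hb : Tendsto (fun n : ℕ => t + (n:ℝ)) atTop atTop :=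
    tendsto_atTop_add_const_left atTop t tendsto_natCast_atTop_atTop
  have hqIoi : IntegrableOn (fun s => -q s) (Set.Ioi t) := by
    refine integrableOn_Ioi_of_intervalIntegral_norm_bounded (1 - (F t - Z t)) t
      (fun n : ℕ => (hqc.neg.integrableOn_Icc).mono_set Set.Ioc_subset_Icc_self) hb ?_
    refine Eventually.of_forall (fun n => ?_)
    have htn : t ≤ t + (n:ℝ) := le_add_of_nonneg_right (Nat.cast_nonneg n)
    have : (∫ x in t..(t + (n:ℝ)), ‖-q x‖) = ∫ x in t..(t + (n:ℝ)), -q x := by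
      refine intervalIntegral.integral_congr (fun s hs => ?_)
      rw [Set.uIcc_of_le htn] at hs
      have : q s ≤ 0 := hqnonpos s (le_trans ht hs.1)
      rw [Real.norm_eq_abs, abs_of_nonneg (by linarith)]
    rw [this]
    exact key _ htn
  have hqbound : (∫ s in Set.Ioi t, -q s) ≤ 1 - (F t - Z t) := by
    have htend : Tendsto (fun n : ℕ => ∫ x in t..(t + (n:ℝ)), -q x) atTop
        (nhds (∫ s in Set.Ioi t, -q s)) :=
      intervalIntegral_tendsto_integral_Ioi t hqIoi hb
    exact le_of_tendsto htend (Eventually.of_forall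
      (fun n => key _ (le_add_of_nonneg_right (Nat.cast_nonneg n))))
  -- fstar on Ioi t
  have hfIoi : IntegrableOn fstar (Set.Ioi t) :=
    hfint.mono_set (fun x hx => le_trans ht (le_of_lt hx))
  have hsplit : (∫ s in Set.Ioi t, fstar s) = 1 - F t := by
    have hdisj : Disjoint (Set.Icc 0 t) (Set.Ioi t) := by
      rw [Set.disjoint_left]
      intro x hx1 hx2
      exact absurd hx1.2 (not_le.mpr hx2)
    have hunion : Set.Icc 0 t ∪ Set.Ioi t = Set.Ici 0 := Set.Icc_union_Ioi_eq_Ici ht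
    have := MeasureTheory.setIntegral_union hdisj measurableSet_Ioi
      (hfint.mono_set Set.Icc_subset_Ici_self) hfIoi (f := fstar) (μ := volume)
    rw [hunion, hfprob] at this
    have hIcc : (∫ s in Set.Icc 0 t, fstar s) = F t := by
      rw [MeasureTheory.integral_Icc_eq_integral_Ioc, ← intervalIntegral.integral_of_le ht]
    rw [hIcc] at this
    linarith
  -- pointwise bound and conclusion
  have hmono : (∫ s in Set.Ioi t, |deriv z s|)
      ≤ ∫ s in Set.Ioi t, (fstar s + -q s) := by
    refine MeasureTheory.integral_mono_of_nonneg
      (Eventually.of_forall (fun s => abs_nonneg _)) (hfIoi.add hqIoi) ?_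
    filter_upwards [ae_restrict_mem measurableSet_Ioi] with s hs
    have hs0 : 0 < s := lt_of_le_of_lt ht hs
    have : deriv z s = fstar s + q s := (hderiv s hs0).deriv
    rw [this]
    have h1 : q s ≤ 0 := hqnonpos s hs0.le
    have h2 : 0 ≤ fstar s := hfnn s
    rw [abs_le]
    constructor <;> [linarith; linarith]
  have hadd : (∫ s in Set.Ioi t, (fstar s + -q s))
      = (∫ s in Set.Ioi t, fstar s) + ∫ s in Set.Ioi t, -q s :=
    MeasureTheory.integral_add hfIoi hqIoi
  have hw : (∫ s in (0:ℝ)..t, (1 - h (t - s)) * fstar s) = F t - Z t := hwz t ht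
  rw [hw]
  have hFt : (∫ s in (0:ℝ)..t, fstar s) = F t := rfl
  rw [hFt]
  calc (∫ s in Set.Ioi t, |deriv z s|)
      ≤ ∫ s in Set.Ioi t, (fstar s + -q s) := hmono
    _ = (∫ s in Set.Ioi t, fstar s) + ∫ s in Set.Ioi t, -q s := hadd
    _ ≤ (1 - F t) + (1 - (F t - Z t)) := by
        rw [hsplit]
        exact add_le_add le_rfl hqbound
end

section
/- Let F and G be distribution functions on ℝ≥0 with 1 - F(t) ~ t^(-α) L(t) (α ∈ (1,2), L slowly varying) and 1 - G(t) = o(1 - F(t)) as t → ∞. Define z(t) = 1 - (F * (1-h))(t) - (1-F(t)) where h = 1 - G, i.e., z(t) = ∫₀ᵗ h(t-s) F(ds). Then z(t) = o(1 - F(t)) as t → ∞. -/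
open Filter MeasureTheory

section auxStmt14
open Set

private lemma tail_anti' (μ : Measure ℝ) [IsProbabilityMeasure μ] :
    Antitone (fun t : ℝ => (μ (Set.Ioi t)).toReal) :=
  fun _ _ hab => ENNReal.toReal_mono (measure_ne_top μ _)
    (measure_mono (Set.Ioi_subset_Ioi hab))

private lemma tail_le_one' (μ : Measure ℝ) [IsProbabilityMeasure μ] (t : ℝ) :
    (μ (Set.Ioi t)).toReal ≤ 1 := by
  simpa using ENNReal.toReal_mono ENNReal.one_ne_top (prob_le_one (μ := μ) (s := Set.Ioi t))

private lemma tail_Ioc' (μ : Measure ℝ) [IsProbabilityMeasure μ] (a b : ℝ) (hab : a ≤ b) :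
    (μ (Set.Ioc a b)).toReal = (μ (Set.Ioi a)).toReal - (μ (Set.Ioi b)).toReal := by
  have hU : Set.Ioc a b ∪ Set.Ioi b = Set.Ioi a := Set.Ioc_union_Ioi_eq_Ioi hab
  have hd : Disjoint (Set.Ioc a b) (Set.Ioi b) := by
    refine Set.disjoint_left.2 fun x hx hx' => ?_
    exact absurd hx.2 (not_le.2 hx')
  have := measure_union (μ := μ) hd measurableSet_Ioi
  rw [hU] at this
  rw [this, ENNReal.toReal_add (measure_ne_top μ _) (measure_ne_top μ _)]
  ring

private lemma conv_integrableOn' (μF μG : Measure ℝ) [IsProbabilityMeasure μF]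
    [IsProbabilityMeasure μG] (t : ℝ) (s : Set ℝ) :
    IntegrableOn (fun x : ℝ => (μG (Set.Ioi (t - x))).toReal) s μF := by
  have hmeas : Measurable (fun x : ℝ => (μG (Set.Ioi (t - x))).toReal) :=
    (tail_anti' μG).measurable.comp (measurable_const.sub measurable_id)
  refine (integrableOn_const (C := (1:ℝ)) (measure_ne_top μF s)).mono'
    hmeas.aestronglyMeasurable ?_
  refine Filter.Eventually.of_forall fun x => ?_
  rw [Real.norm_of_nonneg ENNReal.toReal_nonneg]
  exact tail_le_one' μG _

private lemma z_bound' (μF μG : Measure ℝ) [IsProbabilityMeasure μF] [IsProbabilityMeasure μG]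
    (c t : ℝ) (hc0 : 0 < c) (hc1 : c < 1) (ht : 0 ≤ t) :
    (∫ s in Set.Icc 0 t, (μG (Set.Ioi (t - s))).toReal ∂μF) ≤
      (μG (Set.Ioi ((1 - c) * t))).toReal
        + ((μF (Set.Ioi (c * t))).toReal - (μF (Set.Ioi t)).toReal) := by
  have hct0 : 0 ≤ c * t := mul_nonneg hc0.le ht
  have hctt : c * t ≤ t := by nlinarith
  have hU : Set.Icc 0 (c * t) ∪ Set.Ioc (c * t) t = Set.Icc 0 t :=
    Set.Icc_union_Ioc_eq_Icc hct0 hctt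
  have hd : Disjoint (Set.Icc 0 (c * t)) (Set.Ioc (c * t) t) := by
    refine Set.disjoint_left.2 fun x hx hx' => ?_
    exact absurd hx.2 (not_le.2 hx'.1)
  rw [← hU, setIntegral_union hd measurableSet_Ioc
    (conv_integrableOn' μF μG t _) (conv_integrableOn' μF μG t _)]
  have hb1 : (∫ s in Set.Icc 0 (c * t), (μG (Set.Ioi (t - s))).toReal ∂μF) ≤
      (μG (Set.Ioi ((1 - c) * t))).toReal := by
    have step : (∫ s in Set.Icc 0 (c * t), (μG (Set.Ioi (t - s))).toReal ∂μF) ≤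
        ∫ _ in Set.Icc 0 (c * t), (μG (Set.Ioi ((1 - c) * t))).toReal ∂μF := by
      refine setIntegral_mono_on (conv_integrableOn' μF μG t _)
        (integrableOn_const (measure_ne_top μF _)) measurableSet_Icc
        fun x hx => ?_
      exact tail_anti' μG (by nlinarith [hx.2] : (1 - c) * t ≤ t - x)
    refine step.trans ?_
    rw [setIntegral_const, smul_eq_mul]
    calc (μF (Set.Icc 0 (c*t))).toReal * (μG (Set.Ioi ((1-c)*t))).toReal
        ≤ 1 * (μG (Set.Ioi ((1-c)*t))).toReal := by
          apply mul_le_mul_of_nonneg_right _ ENNReal.toReal_nonneg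
          simpa using ENNReal.toReal_mono ENNReal.one_ne_top
            (prob_le_one (μ := μF) (s := Set.Icc 0 (c*t)))
      _ = _ := one_mul _
  have hb2 : (∫ s in Set.Ioc (c * t) t, (μG (Set.Ioi (t - s))).toReal ∂μF) ≤
      (μF (Set.Ioi (c * t))).toReal - (μF (Set.Ioi t)).toReal := by
    have step : (∫ s in Set.Ioc (c * t) t, (μG (Set.Ioi (t - s))).toReal ∂μF) ≤
        ∫ _ in Set.Ioc (c * t) t, (1:ℝ) ∂μF := by
      refine setIntegral_mono_on (conv_integrableOn' μF μG t _)
        (integrableOn_const (measure_ne_top μF _)) measurableSet_Ioc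
        fun x _ => tail_le_one' μG _
    refine step.trans ?_
    rw [setIntegral_const, smul_eq_mul, mul_one, Measure.real, tail_Ioc' μF _ _ hctt]
  linarith

private lemma ev_pos' (μF : Measure ℝ) [IsProbabilityMeasure μF]
    (α : ℝ) (L : ℝ → ℝ) (hL0 : ∀ t, 0 ≤ L t)
    (hF : Tendsto (fun t : ℝ => (μF (Set.Ioi t)).toReal / (t ^ (-α) * L t)) atTop (nhds 1)) :
    ∀ᶠ t : ℝ in atTop, 0 < t ^ (-α) * L t ∧ 0 < (μF (Set.Ioi t)).toReal := by
  have h := hF.eventually (eventually_gt_nhds (by norm_num : (1:ℝ)/2 < 1))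
  filter_upwards [h, eventually_gt_atTop (0:ℝ)] with t ht ht0
  have hl : 0 ≤ t ^ (-α) * L t :=
    mul_nonneg (Real.rpow_nonneg ht0.le _) (hL0 t)
  have hlpos : 0 < t ^ (-α) * L t := by
    rcases hl.lt_or_eq with h' | h'
    · exact h'
    · exfalso; rw [← h', div_zero] at ht; norm_num at ht
  refine ⟨hlpos, ?_⟩
  have := div_mul_cancel₀ ((μF (Set.Ioi t)).toReal) hlpos.ne'
  nlinarith [ht, hlpos]

private lemma ratio_tendsto' (μF : Measure ℝ) [IsProbabilityMeasure μF]
    (α : ℝ) (L : ℝ → ℝ) (hL0 : ∀ t, 0 ≤ L t)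
    (hslow : ∀ x : ℝ, 0 < x → Tendsto (fun t : ℝ => L (x * t) / L t) atTop (nhds 1))
    (hF : Tendsto (fun t : ℝ => (μF (Set.Ioi t)).toReal / (t ^ (-α) * L t)) atTop (nhds 1))
    (c : ℝ) (hc : 0 < c) :
    Tendsto (fun t : ℝ => (μF (Set.Ioi (c * t))).toReal / (μF (Set.Ioi t)).toReal)
      atTop (nhds (c ^ (-α))) := by
  set Fb : ℝ → ℝ := fun t => (μF (Set.Ioi t)).toReal with hFb
  set l : ℝ → ℝ := fun t => t ^ (-α) * L t with hl
  have hmap : Tendsto (fun t : ℝ => c * t) atTop atTop :=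
    Tendsto.const_mul_atTop hc tendsto_id
  have h2 : Tendsto (fun t => Fb (c * t) / l (c * t)) atTop (nhds 1) := hF.comp hmap
  have hev := ev_pos' μF α L hL0 hF
  have hevc : ∀ᶠ t : ℝ in atTop, 0 < l (c * t) ∧ 0 < Fb (c * t) := hmap.eventually hev
  have h3 : Tendsto (fun t => l (c * t) / l t) atTop (nhds (c ^ (-α))) := by
    have base : Tendsto (fun t => c ^ (-α) * (L (c * t) / L t)) atTop
        (nhds (c ^ (-α))) := by
      simpa using (hslow c hc).const_mul (c ^ (-α))
    refine base.congr' ?_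
    filter_upwards [hev, eventually_gt_atTop (0:ℝ)] with t ht ht0
    have hLt : 0 < L t := by
      rcases (hL0 t).lt_or_eq with h' | h'
      · exact h'
      · exfalso
        have h2 := ht.1
        rw [← h', mul_zero] at h2
        exact lt_irrefl _ h2
    have hrpow : (c * t) ^ (-α) = c ^ (-α) * t ^ (-α) :=
      Real.mul_rpow hc.le ht0.le
    have htpow : (0:ℝ) < t ^ (-α) := Real.rpow_pos_of_pos ht0 _
    rw [hl]
    simp only [hrpow]
    field_simp
  have h4 : Tendsto (fun t => l t / Fb t) atTop (nhds 1) := by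
    have := (hF.inv₀ one_ne_zero)
    simp only [inv_one] at this
    refine this.congr' ?_
    filter_upwards [hev] with t ht
    rw [inv_div]
  have prod : Tendsto (fun t => (Fb (c * t) / l (c * t)) * (l (c * t) / l t) * (l t / Fb t))
      atTop (nhds (c ^ (-α))) := by
    have := (h2.mul h3).mul h4
    simpa using this
  refine prod.congr' ?_
  filter_upwards [hev, hevc] with t ht htc
  have hne : l (c * t) * l t ≠ 0 := (mul_pos htc.1 ht.1).ne'
  field_simp
  rw [show Fb (c*t) * l (c*t) * l t = (l (c*t) * l t) * Fb (c*t) by ring,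
    show l (c*t) * l t * Fb t = (l (c*t) * l t) * Fb t by ring,
    mul_div_mul_left _ _ hne]

end auxStmt14

/-- Let `F`, `G` be distributions on `ℝ≥0` with `1 - F(t) ~ t^(-α) L(t)` (`α ∈ (1,2)`,
`L` slowly varying) and `1 - G(t) = o(1 - F(t))`. Then the convolution
`z(t) = ∫₀ᵗ (1 - G(t-s)) F(ds)` satisfies `z(t) = o(1 - F(t))` as `t → ∞`. -/
theorem stmt14 (μF μG : Measure ℝ)
    [IsProbabilityMeasure μF] [IsProbabilityMeasure μG]
    (hsuppF : μF (Set.Iio 0) = 0) (hsuppG : μG (Set.Iio 0) = 0)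
    (α : ℝ) (hα1 : 1 < α) (hα2 : α < 2)
    (L : ℝ → ℝ) (hL0 : ∀ t, 0 ≤ L t)
    (hslow : ∀ x : ℝ, 0 < x →
      Tendsto (fun t : ℝ => L (x * t) / L t) atTop (nhds 1))
    (hF : Tendsto (fun t : ℝ => (μF (Set.Ioi t)).toReal / (t ^ (-α) * L t))
      atTop (nhds 1))
    (hG : Tendsto (fun t : ℝ => (μG (Set.Ioi t)).toReal / (μF (Set.Ioi t)).toReal)
      atTop (nhds 0))
    (z : ℝ → ℝ)
    (hz : ∀ t : ℝ, z t = ∫ s in Set.Icc 0 t, (μG (Set.Ioi (t - s))).toReal ∂μF) :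
    Tendsto (fun t : ℝ => z t / (μF (Set.Ioi t)).toReal) atTop (nhds 0) := by
  have hev := ev_pos' μF α L hL0 hF
  rw [NormedAddCommGroup.tendsto_nhds_zero]
  intro ε hε
  -- choose c ∈ (0,1) with c^(-α) < 1 + ε/2
  have hcont : ContinuousAt (fun x : ℝ => x ^ (-α)) 1 :=
    Real.continuousAt_rpow_const 1 (-α) (Or.inl one_ne_zero)
  have h1 : Tendsto (fun x : ℝ => x ^ (-α)) (nhdsWithin 1 (Set.Ioo 0 1)) (nhds 1) := by
    have h := hcont.tendsto
    rw [Real.one_rpow] at h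
    exact h.mono_left nhdsWithin_le_nhds
  haveI : (nhdsWithin (1:ℝ) (Set.Ioo 0 1)).NeBot :=
    right_nhdsWithin_Ioo_neBot (by norm_num)
  obtain ⟨c, hcpow, hc01⟩ :=
    ((h1.eventually (eventually_lt_nhds (by linarith : (1:ℝ) < 1 + ε/2))).and
      self_mem_nhdsWithin).exists
  obtain ⟨hc0, hc1⟩ := hc01
  have h1c : (0:ℝ) < 1 - c := by linarith
  set ε' : ℝ := ε/4 * (1-c) ^ α with hε'def
  have hε'pos : 0 < ε' := by positivity
  have hkey : ε' * (1-c) ^ (-α) = ε/4 := by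
    rw [hε'def, mul_assoc, ← Real.rpow_add h1c, add_neg_cancel, Real.rpow_zero, mul_one]
  -- eventual domination of G-tail by ε' * F-tail
  have hG' : ∀ᶠ u : ℝ in atTop,
      (μG (Set.Ioi u)).toReal ≤ ε' * (μF (Set.Ioi u)).toReal := by
    filter_upwards [hG.eventually (eventually_lt_nhds hε'pos), hev] with u hu huev
    have hFu : 0 < (μF (Set.Ioi u)).toReal := huev.2
    have := (div_le_iff₀ hFu).1 hu.le
    linarith
  have hmap1c : Tendsto (fun t : ℝ => (1-c) * t) atTop atTop :=
    Tendsto.const_mul_atTop h1c tendsto_id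
  have hGev : ∀ᶠ t : ℝ in atTop,
      (μG (Set.Ioi ((1-c) * t))).toReal ≤ ε' * (μF (Set.Ioi ((1-c) * t))).toReal :=
    hmap1c.eventually hG'
  -- the comparison function g and its limit
  have r1 := ratio_tendsto' μF α L hL0 hslow hF (1-c) h1c
  have r2 := ratio_tendsto' μF α L hL0 hslow hF c hc0
  have hg : Tendsto (fun t : ℝ =>
      ε' * ((μF (Set.Ioi ((1-c) * t))).toReal / (μF (Set.Ioi t)).toReal)
        + ((μF (Set.Ioi (c * t))).toReal / (μF (Set.Ioi t)).toReal - 1)) atTop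
      (nhds (ε' * (1-c) ^ (-α) + (c ^ (-α) - 1))) :=
    (r1.const_mul ε').add (r2.sub_const 1)
  have hlim : ε' * (1-c) ^ (-α) + (c ^ (-α) - 1) < ε := by
    rw [hkey]; linarith
  have hglt := hg.eventually (eventually_lt_nhds hlim)
  filter_upwards [hev, hGev, hglt, eventually_ge_atTop (0:ℝ)] with t htp hGt hgt ht0
  have hFt : 0 < (μF (Set.Ioi t)).toReal := htp.2
  have hz0 : 0 ≤ z t := by
    rw [hz t]
    exact setIntegral_nonneg measurableSet_Icc fun s _ => ENNReal.toReal_nonneg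
  rw [Real.norm_of_nonneg (div_nonneg hz0 hFt.le)]
  have hb := z_bound' μF μG c t hc0 hc1 ht0
  rw [← hz t] at hb
  calc z t / (μF (Set.Ioi t)).toReal
      ≤ (ε' * (μF (Set.Ioi ((1-c) * t))).toReal
          + ((μF (Set.Ioi (c * t))).toReal - (μF (Set.Ioi t)).toReal))
          / (μF (Set.Ioi t)).toReal := by
        apply div_le_div_of_nonneg_right ?_ hFt.le
        linarith [hb, hGt]
    _ = ε' * ((μF (Set.Ioi ((1-c) * t))).toReal / (μF (Set.Ioi t)).toReal)
          + ((μF (Set.Ioi (c * t))).toReal / (μF (Set.Ioi t)).toReal - 1) := by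
        field_simp
    _ < ε := hgt
end
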